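/- arXiv:1904.07545 — 3 statements merged into one kernel-verified Lean document; each statement's English description precedes it below -/
import Mathlib

section
/- For all natural numbers m, n one has X(1,n) · H(m,1) = H(m,1)^{⊗n} · σ_{m,n} · Z(1,n)^{⊗m}; that is, the H-box and the spiders satisfy the bialgebra law whose right-hand side is the complete bipartite diagram of m Z-spiders and n H-boxes (soundness of rule (BA2) of the phase-free ZH-calculus). -/
/-- An `(m,n)`-qubit map: a complex matrix with rows indexed by output
bit strings of length `n` and columns indexed by input bit strings of length `m`. -/
abbrev QMap (m n : ℕ) : Type := Matrix (Fin n → Bool) (Fin m → Bool) ℂ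

/-- Canonical identification of a pair of bit strings with a single bit string. -/
def bitEquiv (a b : ℕ) : ((Fin a → Bool) × (Fin b → Bool)) ≃ (Fin (a + b) → Bool) :=
  (Equiv.sumArrowEquivProdArrow (Fin a) (Fin b) Bool).symm.trans
    (Equiv.arrowCongr finSumFinEquiv (Equiv.refl Bool))

/-- Kronecker (tensor) product of qubit maps, under the canonical identification. -/
def tens {m n m' n' : ℕ} (A : QMap m n) (B : QMap m' n') : QMap (m + m') (n + n') :=
  Matrix.reindex (bitEquiv n n') (bitEquiv m m') (Matrix.kroneckerMap (· * ·) A B)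

/-- Transport a qubit map along equalities of the numbers of inputs and outputs. -/
def castQ {m m' n n' : ℕ} (hm : m = m') (hn : n = n') (A : QMap m n) : QMap m' n' :=
  Matrix.reindex (Equiv.arrowCongr (finCongr hn) (Equiv.refl Bool))
    (Equiv.arrowCongr (finCongr hm) (Equiv.refl Bool)) A

/-- The Z-spider `Z(m,n)`: entry 1 iff all `m+n` bits are equal (all 0 or all 1). -/
def Zsp (m n : ℕ) : QMap m n := fun j i =>
  if ((∀ k, i k = false) ∧ (∀ k, j k = false)) ∨ ((∀ k, i k = true) ∧ (∀ k, j k = true))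
  then 1 else 0

/-- The X-spider `X(m,n)`: entry 1 iff the sum mod 2 of all `m+n` bits is 0. -/
def Xsp (m n : ℕ) : QMap m n := fun j i =>
  if ((∑ k, (if i k then (1 : ZMod 2) else 0)) + ∑ k, (if j k then (1 : ZMod 2) else 0)) = 0
  then 1 else 0

/-- The (phase-free) H-box `H(m,n)`: entry −1 iff all `m+n` bits are 1, else 1. -/
def Hbox (m n : ℕ) : QMap m n := fun j i =>
  if (∀ k, i k = true) ∧ (∀ k, j k = true) then -1 else 1

/-- The Hadamard gate `(1/√2)·[[1,1],[1,−1]]`. -/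
noncomputable def Had : QMap 1 1 := fun j i =>
  (Real.sqrt 2 : ℂ)⁻¹ * (if i 0 = true ∧ j 0 = true then -1 else 1)

/-- The NOT gate `[[0,1],[1,0]]`. -/
def Xg : QMap 1 1 := fun j i => if j 0 = i 0 then 0 else 1

/-- The Z gate `diag(1,−1)`. -/
def Zg : QMap 1 1 := fun j i => if j 0 = i 0 then (if i 0 = true then -1 else 1) else 0

/-- The triangle `[[1,1],[0,1]]` (row `j`, column `i`; the only zero entry is at `j=1, i=0`). -/
def Tri : QMap 1 1 := fun j i => if j 0 = true ∧ i 0 = false then 0 else 1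

/-- The AND gate: `|x,y⟩ ↦ |x ∧ y⟩`. -/
def ANDg : QMap 2 1 := fun j i => if j 0 = (i 0 && i 1) then 1 else 0

/-- The swap of two qubits. -/
def swapQ : QMap 2 2 := fun j i => if j 0 = i 1 ∧ j 1 = i 0 then 1 else 0

/-- The cup `|00⟩ + |11⟩`. -/
def cupQ : QMap 0 2 := fun j _ => if j 0 = j 1 then 1 else 0

/-- The cap `⟨00| + ⟨11|`. -/
def capQ : QMap 2 0 := fun _ i => if i 0 = i 1 then 1 else 0

/-- The scalar `1/√2` as a `(0,0)`-map. -/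
noncomputable def starQ : QMap 0 0 := fun _ _ => (Real.sqrt 2 : ℂ)⁻¹

/-- `k`-fold tensor power of a qubit map. -/
def tpow {a b : ℕ} (A : QMap a b) : (k : ℕ) → QMap (a * k) (b * k)
  | 0 => (1 : QMap 0 0)
  | k + 1 => tens (tpow A k) A

/-- The wire in block `s` (of `b` blocks), at position `t` within the block (of size `a`). -/
def wp {a b : ℕ} (s : Fin b) (t : Fin a) : Fin (a * b) :=
  ⟨a * s.val + t.val, by
    have ht := t.isLt
    have hs := s.isLt
    have h1 : a * s.val + t.val < a * (s.val + 1) := by rw [Nat.mul_succ]; omega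
    exact lt_of_lt_of_le h1 (Nat.mul_le_mul (le_refl a) hs)⟩

/-- The permutation `σ_{m,n}` regrouping `m` blocks of `n` wires into `n` blocks of `m` wires:
it reindexes bit strings `g : Fin m × Fin n → Bool` to `(s,t) ↦ g(t,s)`. -/
def sigmaQ (m n : ℕ) : QMap (n * m) (m * n) := fun j i =>
  if ∀ (s : Fin m) (t : Fin n), j (wp t s) = i (wp s t) then 1 else 0

section Aux

lemma zmod2_cases (x : ZMod 2) : x = 0 ∨ x = 1 := by revert x; decide

lemma tens_apply {m n m' n' : ℕ} (A : QMap m n) (B : QMap m' n')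
    (j : Fin (n + n') → Bool) (i : Fin (m + m') → Bool) :
    tens A B j i = A (fun x => j (Fin.castAdd n' x)) (fun x => i (Fin.castAdd m' x)) *
      B (fun y => j (Fin.natAdd n y)) (fun y => i (Fin.natAdd m y)) := rfl

lemma castQ_apply {m m' n n' : ℕ} (hm : m = m') (hn : n = n') (A : QMap m n)
    (j : Fin n' → Bool) (i : Fin m' → Bool) :
    castQ hm hn A j i = A (fun x => j (finCongr hn x)) (fun x => i (finCongr hm x)) := rfl

lemma wp_castSucc {a b : ℕ} (s : Fin b) (t : Fin a) :
    (wp s.castSucc t : Fin (a * (b + 1))) = Fin.castAdd a (wp s t) := rfl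

lemma wp_last {a b : ℕ} (t : Fin a) :
    (wp (Fin.last b) t : Fin (a * (b + 1))) = Fin.natAdd (a * b) t := rfl

lemma forall_lastCases {b : ℕ} {P : Fin (b + 1) → Prop} :
    (∀ s, P s) ↔ (∀ s : Fin b, P s.castSucc) ∧ P (Fin.last b) :=
  ⟨fun h => ⟨fun s => h _, h _⟩, fun h s => Fin.lastCases h.2 h.1 s⟩

lemma wp_surj {a b : ℕ} (x : Fin (a * b)) : ∃ (s : Fin b) (t : Fin a), x = wp s t := by
  have hx := x.isLt
  rcases Nat.eq_zero_or_pos a with ha | ha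
  · have h0 : a * b = 0 := by subst ha; exact Nat.zero_mul b
    omega
  · refine ⟨⟨x.val / a, Nat.div_lt_of_lt_mul hx⟩, ⟨x.val % a, Nat.mod_lt _ ha⟩, ?_⟩
    ext
    exact (Nat.div_add_mod x.val a).symm

lemma Hbox_m1_apply (m : ℕ) (k : Fin 1 → Bool) (i : Fin m → Bool) :
    Hbox m 1 k i = if (∀ s, i s = true) ∧ k 0 = true then -1 else 1 := by
  simp [Hbox, Fin.forall_fin_one]

lemma Zsp_1n_apply (n : ℕ) (k : Fin n → Bool) (i : Fin 1 → Bool) :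
    Zsp 1 n k i = if ∀ t, k t = i 0 then 1 else 0 := by
  unfold Zsp
  cases h : i 0 <;> simp [Fin.forall_fin_one, h]

lemma H_tpow (m : ℕ) : ∀ (n : ℕ) (j : Fin (1 * n) → Bool) (h : Fin (m * n) → Bool),
    tpow (Hbox m 1) n j h =
      ∏ t : Fin n, (if (∀ s : Fin m, h (wp t s) = true) ∧ j (wp t 0) = true
        then (-1 : ℂ) else 1)
  | 0, j, h => by
    have hjh : j = h := funext fun x => Fin.elim0 x
    subst hjh
    simp [tpow, Matrix.one_apply]
  | n + 1, j, h => by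
    rw [show tpow (Hbox m 1) (n + 1) = tens (tpow (Hbox m 1) n) (Hbox m 1) from rfl,
        tens_apply, H_tpow m n, Hbox_m1_apply, Fin.prod_univ_castSucc]
    rfl

lemma Z_tpow (n : ℕ) : ∀ (m : ℕ) (g : Fin (n * m) → Bool) (i : Fin (1 * m) → Bool),
    tpow (Zsp 1 n) m g i =
      if ∀ (s : Fin m) (t : Fin n), g (wp s t) = i (wp s 0) then 1 else 0
  | 0, g, i => by
    have hgi : g = i := funext fun x => Fin.elim0 x
    subst hgi
    simp [tpow, Matrix.one_apply]
  | m + 1, g, i => by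
    rw [show tpow (Zsp 1 n) (m + 1) = tens (tpow (Zsp 1 n) m) (Zsp 1 n) from rfl,
        tens_apply, Z_tpow n m, Zsp_1n_apply]
    simp only [ite_mul, one_mul, zero_mul]
    have hiff : (∀ (s : Fin (m + 1)) (t : Fin n), g (wp s t) = i (wp s 0)) ↔
        ((∀ (s : Fin m) (t : Fin n), g (Fin.castAdd n (wp s t)) = i (Fin.castAdd 1 (wp s 0))) ∧
          (∀ t : Fin n, g (Fin.natAdd (n * m) t) = i (Fin.natAdd (1 * m) 0))) :=
      forall_lastCases
    simp only [hiff]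
    by_cases hP : ∀ (s : Fin m) (t : Fin n), g (Fin.castAdd n (wp s t)) = i (Fin.castAdd 1 (wp s 0)) <;>
      by_cases hQ : ∀ t : Fin n, g (Fin.natAdd (n * m) t) = i (Fin.natAdd (1 * m) 0) <;>
        simp [hP, hQ]

lemma parity_prod : ∀ (n : ℕ) (j : Fin n → Bool),
    ∏ t, (if j t then (-1 : ℂ) else 1) =
      if (∑ t, if j t then (1 : ZMod 2) else 0) = 0 then 1 else -1
  | 0, j => by simp
  | n + 1, j => by
    rw [Fin.prod_univ_castSucc, Fin.sum_univ_castSucc, parity_prod n]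
    rcases zmod2_cases (∑ t : Fin n, if j t.castSucc then (1 : ZMod 2) else 0) with h | h <;>
      cases hj : j (Fin.last n) <;>
        simp [h, hj, show (1 : ZMod 2) + 1 = 0 by decide, show (1 : ZMod 2) ≠ 0 by decide]

end Aux

lemma Hn_apply (m n : ℕ) (j : Fin n → Bool) (h : Fin (m * n) → Bool) :
    castQ rfl (one_mul n) (tpow (Hbox m 1) n) j h =
      ∏ t : Fin n, (if (∀ s : Fin m, h (wp t s) = true) ∧ j t = true
        then (-1 : ℂ) else 1) := by
  rw [castQ_apply, H_tpow]
  apply Finset.prod_congr rfl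
  intro t _
  have h2 : finCongr (one_mul n) (wp t (0 : Fin 1)) = t := by
    ext; simp [wp]
  simp only [finCongr_refl, Equiv.refl_apply, h2]

lemma Zm_apply (m n : ℕ) (g : Fin (n * m) → Bool) (i : Fin m → Bool) :
    castQ (one_mul m) rfl (tpow (Zsp 1 n) m) g i =
      if ∀ (s : Fin m) (t : Fin n), g (wp s t) = i s then 1 else 0 := by
  rw [castQ_apply, Z_tpow]
  have h2 : ∀ s : Fin m, finCongr (one_mul m) (wp s (0 : Fin 1)) = s := by
    intro s; ext; simp [wp]
  simp only [finCongr_refl, Equiv.refl_apply, h2]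

/-- the H-box and the spiders satisfy the bialgebra law
(soundness of rule (BA2)). -/
theorem zh_bialgebra_zh (m n : ℕ) :
    Xsp 1 n * Hbox m 1 =
      castQ rfl (one_mul n) (tpow (Hbox m 1) n) * sigmaQ m n *
        castQ (one_mul m) rfl (tpow (Zsp 1 n) m) := by
  classical
  ext j i
  simp only [Matrix.mul_apply]
  have hsum2 : ∀ f : (Fin 1 → Bool) → ℂ,
      ∑ k : Fin 1 → Bool, f k = f (fun _ => true) + f (fun _ => false) := by
    intro f
    rw [← Equiv.sum_comp (Equiv.funUnique (Fin 1) Bool).symm f, Fintype.sum_bool]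
    rfl
  set p : ZMod 2 := ∑ t : Fin n, (if j t then (1 : ZMod 2) else 0) with hp
  -- LHS
  have hL : (∑ k : Fin 1 → Bool, Xsp 1 n j k * Hbox m 1 k i) =
      if (∀ s, i s = true) ∧ p = 1 then -1 else 1 := by
    rw [hsum2]
    have e1 : Xsp 1 n j (fun _ => true) = if p = 1 then 1 else 0 := by
      have hiff : ((1 : ZMod 2) + p = 0) ↔ p = 1 := by
        rcases zmod2_cases p with h | h <;> rw [h] <;> decide
      simp [Xsp, Fin.sum_univ_one, ← hp, hiff]
    have e2 : Xsp 1 n j (fun _ => false) = if p = 0 then 1 else 0 := by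
      simp [Xsp, Fin.sum_univ_one, ← hp]
    have e3 : Hbox m 1 (fun _ => true) i = if ∀ s, i s = true then -1 else 1 := by
      simp [Hbox_m1_apply]
    have e4 : Hbox m 1 (fun _ => false) i = 1 := by
      simp [Hbox_m1_apply]
    rw [e1, e2, e3, e4]
    rcases zmod2_cases p with h | h <;> by_cases hi : ∀ s, i s = true <;>
      simp [h, hi, show (0 : ZMod 2) ≠ 1 by decide]
  -- RHS
  have hmlt : ∀ x : Fin (m * n), x.val % m < m := by
    intro x
    rcases Nat.eq_zero_or_pos m with hm | hm
    · have hx := x.isLt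
      have h0 : m * n = 0 := by rw [hm, Nat.zero_mul]
      omega
    · exact Nat.mod_lt _ hm
  set g₀ : Fin (n * m) → Bool :=
    fun x => i ⟨x.val / n, Nat.div_lt_of_lt_mul x.isLt⟩ with hg0def
  set h₀ : Fin (m * n) → Bool := fun x => i ⟨x.val % m, hmlt x⟩ with hh0def
  have hg0 : ∀ (s : Fin m) (t : Fin n), g₀ (wp s t) = i s := by
    intro s t
    show i _ = i s
    congr 1
    ext
    show (n * s.val + t.val) / n = s.val
    rw [Nat.mul_add_div t.pos, Nat.div_eq_of_lt t.isLt, Nat.add_zero]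
  have hh0 : ∀ (t : Fin n) (s : Fin m), h₀ (wp t s) = i s := by
    intro t s
    show i _ = i s
    congr 1
    ext
    show (m * t.val + s.val) % m = s.val
    rw [Nat.mul_add_mod, Nat.mod_eq_of_lt s.isLt]
  have hz : ∀ g : Fin (n * m) → Bool, g ≠ g₀ →
      castQ (one_mul m) rfl (tpow (Zsp 1 n) m) g i = 0 := by
    intro g hne
    rw [Zm_apply, if_neg]
    intro hcond
    apply hne
    funext x
    obtain ⟨s, t, rfl⟩ := wp_surj x
    rw [hcond s t, hg0]
  have hs : ∀ h : Fin (m * n) → Bool, h ≠ h₀ → sigmaQ m n h g₀ = 0 := by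
    intro h hne
    simp only [sigmaQ]
    rw [if_neg]
    intro hcond
    apply hne
    funext x
    obtain ⟨t, s, rfl⟩ := wp_surj x
    rw [hcond s t, hg0, hh0]
  have hσ : sigmaQ m n h₀ g₀ = 1 := by
    simp only [sigmaQ]
    rw [if_pos]
    intro s t
    rw [hh0, hg0]
  have hR : (∑ g : Fin (n * m) → Bool,
        (∑ h : Fin (m * n) → Bool,
          castQ rfl (one_mul n) (tpow (Hbox m 1) n) j h * sigmaQ m n h g) *
          castQ (one_mul m) rfl (tpow (Zsp 1 n) m) g i) =
      ∏ t : Fin n, (if (∀ s : Fin m, i s = true) ∧ j t = true then (-1 : ℂ) else 1) := by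
    rw [Finset.sum_eq_single_of_mem g₀ (Finset.mem_univ _)
          (fun g _ hg => by rw [hz g hg, mul_zero]),
        Finset.sum_eq_single_of_mem h₀ (Finset.mem_univ _)
          (fun h _ hh => by rw [hs h hh, mul_zero]),
        Zm_apply, if_pos hg0, mul_one, hσ, mul_one, Hn_apply]
    apply Finset.prod_congr rfl
    intro t _
    simp [hh0]
  rw [hL, hR]
  by_cases hi : ∀ s, i s = true
  · simp only [eq_true hi, true_and]
    rw [parity_prod, ← hp]
    rcases zmod2_cases p with h | h <;>
      simp [h, show (0 : ZMod 2) ≠ 1 by decide, show (1 : ZMod 2) ≠ 0 by decide]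
  · simp [hi]
end

section
/- For all natural numbers m, n one has H(m+2, n) · (Z(1,2) ⊗ I_{2^m}) = H(m+1, n); that is, feeding both copies of a copied wire into two legs of an H-box is the same as connecting it by a single wire (the derived deduplication rule (DC) of the phase-free ZH-calculus, Lemma 3.4 and Appendix D). -/
/-!
The map `Z(1,2) ⊗ I` is classical: it sends the basis state `|x₀ x₁ … x_m⟩` to
`|x₀ x₀ x₁ … x_m⟩`. Composing `H(m+2,n)` with it therefore just evaluates the H-box at the
input with its first bit doubled, and an H-box entry only asks whether all bits are `1`,
which doubling a bit does not change.
-/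

theorem bitEquiv_apply (a b : ℕ) (x : Fin a → Bool) (y : Fin b → Bool) :
    bitEquiv a b (x, y) = Fin.append x y := by
  funext t
  refine Fin.addCases (fun s => ?_) (fun s => ?_) t <;> simp [bitEquiv]

theorem bitEquiv_symm_apply (a b : ℕ) (z : Fin (a + b) → Bool) :
    (bitEquiv a b).symm z = (fun s => z (Fin.castAdd b s), fun s => z (Fin.natAdd a s)) := by
  rw [Equiv.symm_apply_eq, bitEquiv_apply, Fin.append_castAdd_natAdd]

namespace QMap

def ofFun {m n : ℕ} (f : (Fin m → Bool) → (Fin n → Bool)) : QMap m n :=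
  (1 : QMap n n).submatrix id f

theorem ofFun_apply {m n : ℕ} (f : (Fin m → Bool) → (Fin n → Bool)) (y : Fin n → Bool)
    (x : Fin m → Bool) : ofFun f y x = if y = f x then 1 else 0 :=
  Matrix.one_apply

theorem mul_ofFun {k m n : ℕ} (A : QMap n k) (f : (Fin m → Bool) → (Fin n → Bool)) :
    A * ofFun f = A.submatrix id f := by
  rw [ofFun, ← Equiv.coe_refl, Matrix.mul_submatrix_one]
  rfl

theorem one_eq_ofFun (m : ℕ) : (1 : QMap m m) = ofFun id :=
  (Matrix.submatrix_id_id _).symm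

theorem Zsp_one_eq_ofFun (n : ℕ) : Zsp 1 n = ofFun (fun x _ => x 0) := by
  ext y x
  rw [ofFun_apply, Zsp]
  refine if_congr ?_ rfl rfl
  simp only [Fin.forall_fin_one, funext_iff]
  cases x 0 <;> simp

theorem tens_ofFun {m n m' n' : ℕ} (f : (Fin m → Bool) → (Fin n → Bool))
    (g : (Fin m' → Bool) → (Fin n' → Bool)) :
    tens (ofFun f) (ofFun g) =
      ofFun (fun x => bitEquiv n n' (Prod.map f g ((bitEquiv m m').symm x))) := by
  ext y x
  simp only [tens, Matrix.reindex_apply, Matrix.submatrix_apply, Matrix.kroneckerMap_apply,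
    ofFun_apply, ite_zero_mul_ite_zero, mul_one, ← Equiv.symm_apply_eq, Prod.ext_iff]
  rfl

theorem castQ_ofFun {m m' n n' : ℕ} (hm : m = m') (hn : n = n')
    (f : (Fin m → Bool) → (Fin n → Bool)) :
    castQ hm hn (ofFun f) = ofFun (fun x => f (x ∘ Fin.cast hm) ∘ Fin.cast hn.symm) := by
  subst hm hn
  rfl

theorem castQ_tens_Zsp_one_two_one (m : ℕ) :
    castQ (Nat.add_comm 1 m) (Nat.add_comm 2 m) (tens (Zsp 1 2) (1 : QMap m m)) =
      ofFun (fun x => Fin.cons (x 0) x) := by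
  rw [Zsp_one_eq_ofFun, one_eq_ofFun, tens_ofFun, castQ_ofFun]
  congr 1
  funext x t
  simp only [bitEquiv_symm_apply, Prod.map, bitEquiv_apply, Function.comp_apply, id]
  rcases t with ⟨t, ht⟩
  match t with
  | 0 => rfl
  | 1 => rfl
  | t + 2 =>
    have hleft : (Fin.cast (by omega) ⟨t + 2, ht⟩ : Fin (2 + m)) = Fin.natAdd 2 ⟨t, by omega⟩ := by
      ext; simp only [Fin.val_cast, Fin.val_natAdd]; omega
    have hright : (⟨t + 2, ht⟩ : Fin (m + 2)) = Fin.succ ⟨t + 1, by omega⟩ := rfl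
    rw [hleft, Fin.append_right, hright, Fin.cons_succ]
    congr 1
    ext; simp only [Fin.val_cast, Fin.val_natAdd]; omega

end QMap

theorem Hbox_apply_cons_head (m n : ℕ) (y : Fin n → Bool) (x : Fin (m + 1) → Bool) :
    Hbox (m + 2) n y (Fin.cons (x 0) x) = Hbox (m + 1) n y x := by
  have hall : (∀ k, (Fin.cons (x 0) x : Fin (m + 2) → Bool) k = true) ↔ ∀ k, x k = true := by
    rw [Fin.forall_fin_succ]
    simp only [Fin.cons_zero, Fin.cons_succ]
    exact and_iff_right_of_imp (· 0)
  simp only [Hbox, hall]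

/-- feeding both copies of a copied wire into two legs of an H-box
is the same as connecting it by a single wire (deduplication rule (DC)). -/
theorem zh_dedup (m n : ℕ) :
    Hbox (m + 2) n *
      castQ (by omega : 1 + m = m + 1) (by omega : 2 + m = m + 2)
        (tens (Zsp 1 2) (1 : QMap m m)) =
    Hbox (m + 1) n := by
  rw [QMap.castQ_tens_Zsp_one_two_one, QMap.mul_ofFun]
  ext y x
  exact Hbox_apply_cons_head m n y x
end

section
/- For all natural numbers m ≥ 1 and n ≥ 1: X(m,n) · (X ⊗ I_{2^{m−1}}) = (X ⊗ I_{2^{n−1}}) · X(m,n); that is, a NOT gate on one leg of an X-spider can be moved to any other leg (the derived NOT-commutation rule of the phase-free ZH-calculus, Lemma 3.2). -/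
/-!
The gate `X ⊗ I` is the permutation matrix of the involution flipping the first bit, so
composing the X-spider with it on either side only relabels one leg. Flipping a single bit
changes the parity of a bit string by one, and the X-spider depends only on the total parity
of its legs, so flipping an input bit and flipping an output bit give the same map.
-/

def flipBit {m : ℕ} (k : Fin m) : Equiv.Perm (Fin m → Bool) :=
  Function.Involutive.toPerm (fun g => Function.update g k (!g k)) fun g => by simp

lemma flipBit_apply {m : ℕ} (k : Fin m) (g : Fin m → Bool) :
    flipBit k g = Function.update g k (!g k) := rfl

@[simp]
lemma flipBit_symm {m : ℕ} (k : Fin m) : (flipBit k).symm = flipBit k := rfl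

def parity {m : ℕ} (g : Fin m → Bool) : ZMod 2 := ∑ k, if g k then 1 else 0

lemma parity_flipBit {m : ℕ} (k : Fin m) (g : Fin m → Bool) :
    parity (flipBit k g) = parity g + 1 := by
  have hbit (l : Fin m) : (if flipBit k g l then (1 : ZMod 2) else 0) =
      (if g l then 1 else 0) + if l = k then 1 else 0 := by
    by_cases h : l = k
    · subst h
      cases hg : g l <;> simp [flipBit_apply, hg, CharTwo.add_self_eq_zero]
    · simp [flipBit_apply, h]
  simp only [parity, hbit, Finset.sum_add_distrib, Finset.sum_ite_eq', Finset.mem_univ, if_true]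

lemma Xsp_apply {m n : ℕ} (j : Fin n → Bool) (i : Fin m → Bool) :
    Xsp m n j i = if parity i + parity j = 0 then 1 else 0 := rfl

lemma Xsp_submatrix_flipBit {m n : ℕ} (k : Fin m) (l : Fin n) :
    (Xsp m n).submatrix id (flipBit k) = (Xsp m n).submatrix (flipBit l) id := by
  ext j i
  simp only [Matrix.submatrix_apply, id, Xsp_apply, parity_flipBit, add_right_comm, add_assoc]

lemma tens_Xg_one (k : ℕ) :
    tens Xg (1 : QMap k k) = (1 : QMap (1 + k) (1 + k)).submatrix (flipBit 0) id := by
  ext j i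
  have h0 : (Fin.castAdd k 0 : Fin (1 + k)) = 0 := rfl
  have hne (x : Fin k) : (Fin.natAdd 1 x : Fin (1 + k)) ≠ 0 := Fin.ne_of_val_ne (by simp)
  simp only [tens, bitEquiv, Matrix.reindex_apply, Equiv.symm_trans, Equiv.arrowCongr_symm,
    Equiv.refl_symm, Equiv.symm_symm, Equiv.coe_trans, Matrix.submatrix_apply,
    Function.comp_apply, Matrix.kroneckerMap_apply, Xg, Equiv.sumArrowEquivProdArrow_apply_fst,
    Equiv.arrowCongr_apply, Equiv.coe_refl, finSumFinEquiv_apply_left, h0, id_eq,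
    Matrix.one_apply, funext_iff, Equiv.sumArrowEquivProdArrow_apply_snd,
    finSumFinEquiv_apply_right, mul_ite, mul_one, mul_zero, flipBit_apply, Fin.forall_fin_add,
    Fin.forall_fin_one, Function.update_self, Bool.not_eq_eq_eq_not, Function.update_of_ne (hne _)]
  split_ifs <;> simp_all

lemma castQ_rfl {m n : ℕ} (A : QMap m n) : castQ rfl rfl A = A := by
  simp [castQ]

lemma castQ_tens_Xg_one {m k : ℕ} (h : 1 + k = m) :
    castQ h h (tens Xg (1 : QMap k k)) = (1 : QMap m m).submatrix (flipBit ⟨0, by omega⟩) id := by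
  subst h
  exact (castQ_rfl _).trans (tens_Xg_one k)

/-- a NOT gate on one leg of an X-spider can be moved to any other leg. -/
theorem zh_not_commute (m n : ℕ) (hm : 1 ≤ m) (hn : 1 ≤ n) :
    Xsp m n *
      castQ (by omega : 1 + (m - 1) = m) (by omega : 1 + (m - 1) = m)
        (tens Xg (1 : QMap (m - 1) (m - 1))) =
    castQ (by omega : 1 + (n - 1) = n) (by omega : 1 + (n - 1) = n)
        (tens Xg (1 : QMap (n - 1) (n - 1))) * Xsp m n := by
  rw [castQ_tens_Xg_one, castQ_tens_Xg_one, Matrix.mul_submatrix_one,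
    ← Equiv.coe_refl, Matrix.one_submatrix_mul, flipBit_symm]
  exact Xsp_submatrix_flipBit _ _
end
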